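/- arXiv:1804.00944 — 3 statements merged into one kernel-verified Lean document; each statement's English description precedes it below -/
import Mathlib

section
/- Let 0 → E' → E → E'' → 0 be an exact sequence of X-filtered R-modules in which the maps f : E' → E and g : E → E'' are bicontrolled. If E is lean, then E'' is lean. -/
open Metric Set

/-- The closed metric `r`-enlargement of a subset `S` of a metric space. -/
def enl {X : Type*} [PseudoMetricSpace X] (S : Set X) (r : ℝ) : Set X :=
  {x | ∃ s ∈ S, dist x s ≤ r}

section Defs

variable {X : Type*} [PseudoMetricSpace X] (R : Type*) [Ring R]

/-- An `X`-filtered `R`-module structure on `M`: a monotone assignment of submodules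
with `F ∅ = ⊥` and `F X` being the whole module. -/
def IsXFiltration {M : Type*} [AddCommGroup M] [Module R M]
    (F : Set X → Submodule R M) : Prop :=
  Monotone F ∧ F ∅ = ⊥ ∧ F Set.univ = ⊤

/-- `F` is `D`-lean: `F(S) ⊆ ∑_{x ∈ S} F(x[D])` for every `S ⊆ X`. -/
def IsLean {M : Type*} [AddCommGroup M] [Module R M]
    (F : Set X → Submodule R M) (D : ℝ) : Prop :=
  ∀ S : Set X, F S ≤ ⨆ x ∈ S, F (closedBall x D)

/-- `F` is `δ`-scattered: `F(X) ⊆ ∑_{x ∈ X} F(x[δ])`. -/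
def IsScattered {M : Type*} [AddCommGroup M] [Module R M]
    (F : Set X → Submodule R M) (δ : ℝ) : Prop :=
  F Set.univ ≤ ⨆ x : X, F (closedBall x δ)

/-- `F` is `d`-insular: `F(S) ∩ F(U) ⊆ F(S[d] ∩ U[d])` for all `S, U ⊆ X`. -/
def IsInsular {M : Type*} [AddCommGroup M] [Module R M]
    (F : Set X → Submodule R M) (d : ℝ) : Prop :=
  ∀ S U : Set X, F S ⊓ F U ≤ F (enl S d ∩ enl U d)

/-- `F` is locally finitely generated: `F(T)` is a finitely generated `R`-module
for every bounded `T ⊆ X`. -/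
def IsLocallyFG {M : Type*} [AddCommGroup M] [Module R M]
    (F : Set X → Submodule R M) : Prop :=
  ∀ T : Set X, Bornology.IsBounded T → (F T).FG

/-- `f` is `b`-bicontrolled: `f(F(S)) ⊆ G(S[b])` and `f(F(X)) ∩ G(S) ⊆ f(F(S[b]))`
for all `S ⊆ X`. -/
def IsBicontrolled {M N : Type*} [AddCommGroup M] [Module R M]
    [AddCommGroup N] [Module R N]
    (F : Set X → Submodule R M) (G : Set X → Submodule R N)
    (f : M →ₗ[R] N) (b : ℝ) : Prop :=
  (∀ S : Set X, (F S).map f ≤ G (enl S b)) ∧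
  (∀ S : Set X, (F Set.univ).map f ⊓ G S ≤ (F (enl S b)).map f)

end Defs

/-!
Lift `z ∈ E''(S)` through `g` to `x ∈ E(S[b])` using the second bicontrol condition, split `x`
by leanness of `E` into pieces from `E(y[D])` with `y ∈ S[b]`, and push them forward: each lands
in `E''(y[D][b]) ⊆ E''(s[D + 2b])` for some `s ∈ S` with `dist y s ≤ b`.
-/

theorem enl_closedBall_subset_closedBall {X : Type*} [PseudoMetricSpace X] {y s : X}
    {r b c : ℝ} (hys : dist y s ≤ c) : enl (closedBall y r) b ⊆ closedBall s (r + b + c) := by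
  rintro p ⟨q, hq, hpq⟩
  rw [mem_closedBall] at hq ⊢
  linarith [dist_triangle4 p q y s]

section Bicontrolled

variable {X : Type*} [PseudoMetricSpace X] {R : Type*} [Ring R]
  {M N : Type*} [AddCommGroup M] [Module R M] [AddCommGroup N] [Module R N]
  {F : Set X → Submodule R M} {G : Set X → Submodule R N} {f : M →ₗ[R] N} {b : ℝ}

theorem IsBicontrolled.le_map_enl_of_surjective (hf : IsBicontrolled R F G f b)
    (hF : F univ = ⊤) (hsurj : Function.Surjective f) (S : Set X) :
    G S ≤ (F (enl S b)).map f := by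
  have hrange : (F univ).map f = ⊤ := by
    rw [hF, Submodule.map_top, LinearMap.range_eq_top.mpr hsurj]
  intro z hz
  exact hf.2 S ⟨hrange ▸ Submodule.mem_top, hz⟩

theorem map_iSup_closedBall_le (hG : Monotone G)
    (hf : ∀ S : Set X, (F S).map f ≤ G (enl S b)) (S : Set X) {D : ℝ} :
    (⨆ y ∈ enl S b, F (closedBall y D)).map f ≤ ⨆ s ∈ S, G (closedBall s (D + b + b)) := by
  simp only [Submodule.map_iSup]
  refine iSup₂_le fun y ⟨s, hs, hys⟩ => ?_
  calc (F (closedBall y D)).map f ≤ G (enl (closedBall y D) b) := hf _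
    _ ≤ G (closedBall s (D + b + b)) := hG (enl_closedBall_subset_closedBall hys)
    _ ≤ ⨆ s ∈ S, G (closedBall s (D + b + b)) :=
      le_iSup₂ (f := fun s _ => G (closedBall s (D + b + b))) s hs

end Bicontrolled

theorem lean_of_quotient_general
    {X : Type*} [PseudoMetricSpace X] (R : Type*) [Ring R]
    {M M'' : Type*} [AddCommGroup M] [Module R M]
    [AddCommGroup M''] [Module R M'']
    (E : Set X → Submodule R M)
    (E'' : Set X → Submodule R M'') (g : M →ₗ[R] M'')
    (hE : IsXFiltration R E) (hE'' : IsXFiltration R E'')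
    (hsurj : Function.Surjective g)
    (b : ℝ) (hb : 0 ≤ b)
    (hg : IsBicontrolled R E E'' g b)
    (D : ℝ) (hD : 0 ≤ D) (hlean : IsLean R E D) :
    ∃ D'' : ℝ, 0 ≤ D'' ∧ IsLean R E'' D'' := by
  refine ⟨D + b + b, by linarith, fun S => ?_⟩
  calc E'' S ≤ (E (enl S b)).map g := hg.le_map_enl_of_surjective hE.2.2 hsurj S
    _ ≤ (⨆ y ∈ enl S b, E (closedBall y D)).map g := Submodule.map_mono (hlean _)
    _ ≤ ⨆ s ∈ S, E'' (closedBall s (D + b + b)) := map_iSup_closedBall_le hE''.1 hg.1 S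

/-- in an exact sequence of `X`-filtered modules with bicontrolled maps,
if `E` is lean then `E''` is lean. -/
theorem lean_of_quotient
    {X : Type*} [PseudoMetricSpace X] (R : Type*) [Ring R]
    {M' M M'' : Type*} [AddCommGroup M'] [Module R M'] [AddCommGroup M] [Module R M]
    [AddCommGroup M''] [Module R M'']
    (E' : Set X → Submodule R M') (E : Set X → Submodule R M)
    (E'' : Set X → Submodule R M'') (f : M' →ₗ[R] M) (g : M →ₗ[R] M'')
    (hE' : IsXFiltration R E') (hE : IsXFiltration R E) (hE'' : IsXFiltration R E'')
    (hinj : Function.Injective f) (hsurj : Function.Surjective g)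
    (hexact : LinearMap.range f = LinearMap.ker g)
    (b : ℝ) (hb : 0 ≤ b)
    (hf : IsBicontrolled R E' E f b) (hg : IsBicontrolled R E E'' g b)
    (D : ℝ) (hD : 0 ≤ D) (hlean : IsLean R E D) :
    ∃ D'' : ℝ, 0 ≤ D'' ∧ IsLean R E'' D'' :=
  lean_of_quotient_general R E E'' g hE hE'' hsurj b hb hg D hD hlean
end

section
/- Let 0 → E' → E → E'' → 0 be an exact sequence of X-filtered R-modules with both maps bicontrolled. If E is insular, then E' (with the filtration E'(S) = f^{-1}(f(E') ∩ E(S)), equivalently the canonical submodule filtration) is insular. -/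
open Metric Set

theorem IsInsular.comap {X : Type*} [PseudoMetricSpace X] {R : Type*} [Ring R]
    {M' M : Type*} [AddCommGroup M'] [Module R M'] [AddCommGroup M] [Module R M]
    {E : Set X → Submodule R M} {d : ℝ} (hE : IsInsular R E d) (f : M' →ₗ[R] M) :
    IsInsular R (fun S => (E S).comap f) d := by
  intro S U
  rw [← Submodule.comap_inf]
  exact Submodule.comap_mono (hE S U)

theorem insular_of_sub_general
    {X : Type*} [PseudoMetricSpace X] (R : Type*) [Ring R]
    {M' M : Type*} [AddCommGroup M'] [Module R M'] [AddCommGroup M] [Module R M]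
    (E' : Set X → Submodule R M') (E : Set X → Submodule R M)
    (f : M' →ₗ[R] M)
    (hcanon : ∀ S : Set X, E' S = Submodule.comap f (LinearMap.range f ⊓ E S))
    (d : ℝ) (hd : 0 ≤ d) (hins : IsInsular R E d) :
    ∃ d' : ℝ, 0 ≤ d' ∧ IsInsular R E' d' := by
  have hrange : (LinearMap.range f).comap f = ⊤ :=
    eq_top_iff.2 fun x _ => LinearMap.mem_range_self f x
  have hE' : E' = fun S => (E S).comap f := by
    funext S
    rw [hcanon, Submodule.comap_inf, hrange, top_inf_eq]
  exact ⟨d, hd, hE' ▸ hins.comap f⟩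

/-- in an exact sequence of `X`-filtered modules with bicontrolled maps,
if `E` is insular then `E'`, carrying the canonical submodule filtration
`E'(S) = f⁻¹(f(E') ∩ E(S))`, is insular. -/
theorem insular_of_sub
    {X : Type*} [PseudoMetricSpace X] (R : Type*) [Ring R]
    {M' M M'' : Type*} [AddCommGroup M'] [Module R M'] [AddCommGroup M] [Module R M]
    [AddCommGroup M''] [Module R M'']
    (E' : Set X → Submodule R M') (E : Set X → Submodule R M)
    (E'' : Set X → Submodule R M'') (f : M' →ₗ[R] M) (g : M →ₗ[R] M'')
    (hE' : IsXFiltration R E') (hE : IsXFiltration R E) (hE'' : IsXFiltration R E'')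
    (hinj : Function.Injective f) (hsurj : Function.Surjective g)
    (hexact : LinearMap.range f = LinearMap.ker g)
    (b : ℝ) (hb : 0 ≤ b)
    (hf : IsBicontrolled R E' E f b) (hg : IsBicontrolled R E E'' g b)
    (hcanon : ∀ S : Set X, E' S = Submodule.comap f (LinearMap.range f ⊓ E S))
    (d : ℝ) (hd : 0 ≤ d) (hins : IsInsular R E d) :
    ∃ d' : ℝ, 0 ≤ d' ∧ IsInsular R E' d' :=
  insular_of_sub_general R E' E f hcanon d hd hins
end

section
/- Let 0 → E' → E → E'' → 0 be an exact sequence of X-filtered R-modules with both maps bicontrolled. If E is insular and E' is lean, then E'' is insular. -/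
open Metric Set

/-!
Lift `z ∈ E''(S) ∩ E''(U)` through `g` to `x ∈ E(S[b])` and `y ∈ E(U[b])`. Their difference lies
in `ker g = f(E')`, and by leanness its preimage splits as `w_S + w_U` with `w_S` near `S` and `w_U`
near `U`. Then `x - f w_S = y + f w_U` is another lift of `z` lying in `E` near `S` and near `U`,
so insularity of `E` and control of `g` place `z` in `E''(S[4b+D+d] ∩ U[4b+D+d])`.
-/

section Enlargement

variable {X : Type*} [PseudoMetricSpace X] {S T : Set X} {a c r : ℝ}

lemma subset_enl (hr : 0 ≤ r) : S ⊆ enl S r :=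
  fun x hx => ⟨x, hx, by rwa [dist_self]⟩

lemma enl_mono_left (h : S ⊆ T) : enl S r ⊆ enl T r := by
  rintro x ⟨s, hs, hxs⟩
  exact ⟨s, h hs, hxs⟩

lemma enl_enl_subset (h : a + c ≤ r) : enl (enl S a) c ⊆ enl S r := by
  rintro x ⟨v, ⟨s, hs, hvs⟩, hxv⟩
  exact ⟨s, hs, by linarith [dist_triangle x v s]⟩

lemma closedBall_subset_enl {v : X} (hv : v ∈ S) : closedBall v r ⊆ enl S r :=
  fun _ hx => ⟨v, hv, mem_closedBall.mp hx⟩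

lemma enl_union_subset : enl (S ∪ T) r ⊆ enl S r ∪ enl T r := by
  rintro x ⟨s, hs | hs, hxs⟩
  exacts [Or.inl ⟨s, hs, hxs⟩, Or.inr ⟨s, hs, hxs⟩]

lemma enl_inter_subset : enl (S ∩ T) r ⊆ enl S r ∩ enl T r := by
  rintro x ⟨s, hs, hxs⟩
  exact ⟨⟨s, hs.1, hxs⟩, ⟨s, hs.2, hxs⟩⟩

end Enlargement

section Filtered

variable {X : Type*} [PseudoMetricSpace X] {R : Type*} [Ring R]
  {M' M M'' : Type*} [AddCommGroup M'] [Module R M'] [AddCommGroup M] [Module R M]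
  [AddCommGroup M''] [Module R M'']

lemma IsLean.le_sup_enl {F : Set X → Submodule R M} {D : ℝ} (hlean : IsLean R F D)
    (hmono : Monotone F) (S T : Set X) : F (S ∪ T) ≤ F (enl S D) ⊔ F (enl T D) := by
  refine (hlean _).trans (iSup₂_le fun v hv => ?_)
  rcases hv with hv | hv
  · exact le_sup_of_le_left (hmono (closedBall_subset_enl hv))
  · exact le_sup_of_le_right (hmono (closedBall_subset_enl hv))

namespace IsBicontrolled

variable {F : Set X → Submodule R M} {G : Set X → Submodule R M''} {g : M →ₗ[R] M''} {b : ℝ}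

lemma apply_mem (hg : IsBicontrolled R F G g b) {S : Set X} {x : M} (hx : x ∈ F S) :
    g x ∈ G (enl S b) :=
  hg.1 S ⟨x, hx, rfl⟩

lemma range_inf_le (hg : IsBicontrolled R F G g b) (htop : F univ = ⊤) (S : Set X) :
    LinearMap.range g ⊓ G S ≤ (F (enl S b)).map g := by
  simpa only [htop, Submodule.map_top] using hg.2 S

lemma le_map (hg : IsBicontrolled R F G g b) (htop : F univ = ⊤) (hsurj : Function.Surjective g)
    (S : Set X) : G S ≤ (F (enl S b)).map g := by
  simpa only [LinearMap.range_eq_top.mpr hsurj, top_inf_eq] using hg.range_inf_le htop S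

end IsBicontrolled

lemma map_inf_map_le_map_inf_enl (E' : Set X → Submodule R M') (E : Set X → Submodule R M)
    {f : M' →ₗ[R] M} {g : M →ₗ[R] M''} (hexact : LinearMap.range f = LinearMap.ker g)
    (hE'mono : Monotone E') (hE'top : E' univ = ⊤) (hEmono : Monotone E)
    {b D : ℝ} (hbD : 0 ≤ 2 * b + D) (hf : IsBicontrolled R E' E f b) (hlean : IsLean R E' D)
    (S T : Set X) :
    (E S).map g ⊓ (E T).map g ≤
      (E (enl S (2 * b + D)) ⊓ E (enl T (2 * b + D))).map g := by
  rintro z ⟨⟨x, hx, rfl⟩, ⟨y, hy, hyx⟩⟩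
  have hxy_range : x - y ∈ LinearMap.range f := by
    rw [hexact, LinearMap.mem_ker, map_sub, hyx, sub_self]
  have hxy_mem : x - y ∈ E (S ∪ T) :=
    sub_mem (hEmono subset_union_left hx) (hEmono subset_union_right hy)
  obtain ⟨w, hw, hfw⟩ := hf.range_inf_le hE'top _ ⟨hxy_range, hxy_mem⟩
  have hw_split : w ∈ E' (enl (enl S b) D) ⊔ E' (enl (enl T b) D) :=
    hlean.le_sup_enl hE'mono _ _ (hE'mono enl_union_subset hw)
  obtain ⟨wS, hwS, wT, hwT, rfl⟩ := Submodule.mem_sup.mp hw_split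
  have hnear : ∀ {V : Set X} {v : M'}, v ∈ E' (enl (enl V b) D) → f v ∈ E (enl V (2 * b + D)) :=
    fun hv => hEmono ((enl_enl_subset le_rfl).trans (enl_enl_subset (by linarith)))
      (hf.apply_mem hv)
  have hgfwS : g (f wS) = 0 := LinearMap.mem_ker.mp (hexact ▸ LinearMap.mem_range_self f wS)
  refine ⟨x - f wS, ⟨sub_mem (hEmono (subset_enl hbD) hx) (hnear hwS), ?_⟩, ?_⟩
  · have hcorr : x - f wS = y + f wT := by
      rw [map_add] at hfw
      linear_combination (norm := abel) -hfw
    rw [SetLike.mem_coe, hcorr]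
    exact add_mem (hEmono (subset_enl hbD) hy) (hnear hwT)
  · rw [map_sub, hgfwS, sub_zero]

end Filtered

theorem insular_of_quotient_general
    {X : Type*} [PseudoMetricSpace X] (R : Type*) [Ring R]
    {M' M M'' : Type*} [AddCommGroup M'] [Module R M'] [AddCommGroup M] [Module R M]
    [AddCommGroup M''] [Module R M'']
    (E' : Set X → Submodule R M') (E : Set X → Submodule R M)
    (E'' : Set X → Submodule R M'') (f : M' →ₗ[R] M) (g : M →ₗ[R] M'')
    (hE' : IsXFiltration R E') (hE : IsXFiltration R E) (hE'' : IsXFiltration R E'')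
    (hsurj : Function.Surjective g)
    (hexact : LinearMap.range f = LinearMap.ker g)
    (b : ℝ) (hb : 0 ≤ b)
    (hf : IsBicontrolled R E' E f b) (hg : IsBicontrolled R E E'' g b)
    (d D : ℝ) (hd : 0 ≤ d) (hD : 0 ≤ D)
    (hins : IsInsular R E d) (hlean : IsLean R E' D) :
    ∃ d'' : ℝ, 0 ≤ d'' ∧ IsInsular R E'' d'' := by
  obtain ⟨hE'mono, -, hE'top⟩ := hE'
  obtain ⟨hEmono, -, hEtop⟩ := hE
  refine ⟨4 * b + D + d, by positivity, fun S U => ?_⟩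
  have hrad : ∀ V : Set X, enl (enl (enl V b) (2 * b + D)) d ⊆ enl V (3 * b + D + d) :=
    fun V => (enl_mono_left (enl_enl_subset le_rfl)).trans (enl_enl_subset (by linarith))
  calc E'' S ⊓ E'' U
      ≤ (E (enl S b)).map g ⊓ (E (enl U b)).map g :=
        inf_le_inf (hg.le_map hEtop hsurj S) (hg.le_map hEtop hsurj U)
    _ ≤ (E (enl (enl S b) (2 * b + D)) ⊓ E (enl (enl U b) (2 * b + D))).map g :=
        map_inf_map_le_map_inf_enl E' E hexact hE'mono hE'top hEmono (by linarith) hf hlean _ _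
    _ ≤ (E (enl (enl (enl S b) (2 * b + D)) d ∩ enl (enl (enl U b) (2 * b + D)) d)).map g :=
        Submodule.map_mono (hins _ _)
    _ ≤ E'' (enl (enl S (3 * b + D + d) ∩ enl U (3 * b + D + d)) b) :=
        (Submodule.map_mono (hEmono (inter_subset_inter (hrad S) (hrad U)))).trans (hg.1 _)
    _ ≤ E'' (enl S (4 * b + D + d) ∩ enl U (4 * b + D + d)) :=
        hE''.1 (enl_inter_subset.trans (inter_subset_inter
          (enl_enl_subset (by linarith)) (enl_enl_subset (by linarith))))

/-- in an exact sequence of `X`-filtered modules with bicontrolled maps,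
if `E` is insular and `E'` is lean then `E''` is insular. -/
theorem insular_of_quotient
    {X : Type*} [PseudoMetricSpace X] (R : Type*) [Ring R]
    {M' M M'' : Type*} [AddCommGroup M'] [Module R M'] [AddCommGroup M] [Module R M]
    [AddCommGroup M''] [Module R M'']
    (E' : Set X → Submodule R M') (E : Set X → Submodule R M)
    (E'' : Set X → Submodule R M'') (f : M' →ₗ[R] M) (g : M →ₗ[R] M'')
    (hE' : IsXFiltration R E') (hE : IsXFiltration R E) (hE'' : IsXFiltration R E'')
    (hinj : Function.Injective f) (hsurj : Function.Surjective g)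
    (hexact : LinearMap.range f = LinearMap.ker g)
    (b : ℝ) (hb : 0 ≤ b)
    (hf : IsBicontrolled R E' E f b) (hg : IsBicontrolled R E E'' g b)
    (d D : ℝ) (hd : 0 ≤ d) (hD : 0 ≤ D)
    (hins : IsInsular R E d) (hlean : IsLean R E' D) :
    ∃ d'' : ℝ, 0 ≤ d'' ∧ IsInsular R E'' d'' :=
  insular_of_quotient_general R E' E E'' f g hE' hE hE'' hsurj hexact b hb hf hg d D hd hD hins
    hlean
end
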